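/- Let x, y ∈ ℂⁿ be unit vectors. For every complex skew-symmetric matrix R (Rᵀ = −R) with spectral norm ‖R‖ ≤ 1, one has |y*Rx| ≤ √(1 − |xᵀy|²). -/

import Mathlib

/-!
For skew-symmetric `R` the quadratic form `xᵀRx` vanishes, so with `x̄` the entrywise conjugate,
`v = Rx` is orthogonal to the unit vector `x̄`. Hence in `y*Rx = ⟪y, v⟫` only the component of `y`
orthogonal to `x̄` contributes; its norm is `√(1 - |⟪x̄, y⟫|²) = √(1 - |xᵀy|²)`, and Cauchy–Schwarz
with `‖v‖ ≤ ‖R‖ ≤ 1` gives the bound.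
-/

open Matrix

/-- The spectral (operator 2-) norm of a complex matrix. -/
noncomputable def specNorm {n : ℕ} (A : Matrix (Fin n) (Fin n) ℂ) : ℝ :=
  ‖Matrix.toEuclideanCLM (𝕜 := ℂ) A‖

open WithLp

theorem Matrix.dotProduct_mulVec_self_eq_zero_of_transpose_eq_neg {ι R : Type*} [Fintype ι]
    [CommRing R] [IsAddTorsionFree R] {A : Matrix ι ι R} (hA : Aᵀ = -A) (v : ι → R) :
    v ⬝ᵥ A *ᵥ v = 0 := by
  rw [← self_eq_neg]
  calc v ⬝ᵥ A *ᵥ v = v ᵥ* A ⬝ᵥ v := dotProduct_mulVec ..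
    _ = Aᵀ *ᵥ v ⬝ᵥ v := by rw [mulVec_transpose]
    _ = -(v ⬝ᵥ A *ᵥ v) := by rw [hA, neg_mulVec, neg_dotProduct, dotProduct_comm]

section InnerProductSpace

variable {𝕜 E : Type*} [RCLike 𝕜] [NormedAddCommGroup E] [InnerProductSpace 𝕜 E]

theorem norm_sub_inner_smul_sq {u : E} (hu : ‖u‖ = 1) (w : E) :
    ‖w - inner 𝕜 u w • u‖ ^ 2 = ‖w‖ ^ 2 - ‖inner 𝕜 u w‖ ^ 2 := by
  rw [norm_sub_sq (𝕜 := 𝕜), inner_smul_right, ← inner_conj_symm, RCLike.conj_mul, norm_smul, hu,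
    mul_one]
  norm_cast
  rw [RCLike.norm_conj]
  ring

theorem norm_inner_le_sqrt_mul_norm_of_inner_eq_zero {u v : E} (hu : ‖u‖ = 1)
    (huv : inner 𝕜 u v = 0) (w : E) :
    ‖inner 𝕜 w v‖ ≤ √(‖w‖ ^ 2 - ‖inner 𝕜 u w‖ ^ 2) * ‖v‖ := by
  have hproj : inner 𝕜 w v = inner 𝕜 (w - inner 𝕜 u w • u) v := by
    rw [inner_sub_left, inner_smul_left, huv, mul_zero, sub_zero]
  rw [hproj, ← norm_sub_inner_smul_sq hu, Real.sqrt_sq (norm_nonneg _)]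
  exact norm_inner_le_norm _ _

end InnerProductSpace

namespace EuclideanSpace

variable {𝕜 ι : Type*} [RCLike 𝕜] [Fintype ι]

theorem norm_toLp_star (v : ι → 𝕜) : ‖toLp 2 (star v)‖ = ‖toLp 2 v‖ := by
  simp [norm_eq]

theorem inner_toLp_star_left (v : ι → 𝕜) (w : EuclideanSpace 𝕜 ι) :
    inner 𝕜 (toLp 2 (star v)) w = v ⬝ᵥ ofLp w := by
  rw [inner_eq_star_dotProduct, star_star, dotProduct_comm]

end EuclideanSpace

theorem skew_symmetric_upper_bound {n : ℕ} (x y : EuclideanSpace ℂ (Fin n))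
    (hx : ‖x‖ = 1) (hy : ‖y‖ = 1) (R : Matrix (Fin n) (Fin n) ℂ)
    (hR : Rᵀ = -R) (hnorm : specNorm R ≤ 1) :
    ‖star (y : Fin n → ℂ) ⬝ᵥ R.mulVec (x : Fin n → ℂ)‖ ≤
      Real.sqrt (1 - ‖(x : Fin n → ℂ) ⬝ᵥ (y : Fin n → ℂ)‖ ^ 2) := by
  set v := toEuclideanCLM (𝕜 := ℂ) R x
  have hu : ‖toLp 2 (star (ofLp x))‖ = 1 := by
    rw [EuclideanSpace.norm_toLp_star, toLp_ofLp, hx]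
  have huv : inner ℂ (toLp 2 (star (ofLp x))) v = 0 := by
    rw [EuclideanSpace.inner_toLp_star_left, ofLp_toEuclideanCLM,
      dotProduct_mulVec_self_eq_zero_of_transpose_eq_neg hR]
  have hv : ‖v‖ ≤ 1 :=
    ((toEuclideanCLM (𝕜 := ℂ) R).le_opNorm x).trans (by rw [hx, mul_one]; exact hnorm)
  have hbound := norm_inner_le_sqrt_mul_norm_of_inner_eq_zero hu huv y
  rw [hy, one_pow, EuclideanSpace.inner_toLp_star_left, EuclideanSpace.inner_eq_star_dotProduct,
    ofLp_toEuclideanCLM, dotProduct_comm] at hbound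
  exact hbound.trans (mul_le_of_le_one_right (Real.sqrt_nonneg _) hv)
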